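/- Wick's theorem for i.i.d. standard Gaussians: for i.i.d. centered real Gaussian random variables ω_{x₁}, …, ω_{x_{2n}} (indices may repeat) with unit variance, E[ω_{x₁}⋯ω_{x_{2n}}] = Σ_{π} Π_{{i,j} ∈ π} E[ω_{x_i} ω_{x_j}], where the sum ranges over all perfect matchings π of {1, …, 2n}. -/

import Mathlib

/-!
Group the indices by value: if `y` occurs `m y` times among the `x i`, independence turns the
left side into `∏ y, E[ω_y ^ m y]`. The moments of a standard Gaussian obey Stein's recursion
`E[ω ^ (m + 2)] = (m + 1) E[ω ^ m]`, read off from the moment generating function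
`exp (t ^ 2 / 2)`. On the right, `E[ω_y ω_z] = δ_{yz}`, so the sum counts the perfect matchings
that only pair equal indices, i.e. families of perfect matchings of the fibres of `x`. Perfect
matchings of an `(m + 2)`-element set obey the same recursion: a given point is paired with one
of the `m + 1` others, and the rest is a perfect matching of the remaining `m` points. Both sides
are therefore `∏ y, (m y - 1)‼`.
-/

open MeasureTheory ProbabilityTheory Real Equiv Finset

/-- `(n - 1)‼` for even `n` and `0` for odd `n`. -/
def pairingCount : ℕ → ℕ
  | 0 => 1
  | 1 => 0
  | n + 2 => (n + 1) * pairingCount n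

lemma integral_pow_gaussianReal_eq_iteratedDeriv (n : ℕ) :
    ∫ t, t ^ n ∂gaussianReal 0 1 = iteratedDeriv n (fun t => exp (t ^ 2 / 2)) 0 := by
  have h := iteratedDeriv_mgf_zero (X := id) (μ := gaussianReal 0 1) (by simp) n
  simp only [mgf_id_gaussianReal] at h
  simpa using h.symm

/-- Leibniz's rule applied to `g' = t g`, where `g t = exp (t ^ 2 / 2)`. -/
lemma integral_pow_add_two_gaussianReal (n : ℕ) :
    ∫ t, t ^ (n + 2) ∂gaussianReal 0 1 = (n + 1) * ∫ t, t ^ n ∂gaussianReal 0 1 := by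
  set g : ℝ → ℝ := fun t => exp (t ^ 2 / 2)
  have hg : ContDiff ℝ ⊤ g := by fun_prop
  have hderiv : deriv g = fun t => t * g t := by
    ext t
    rw [(((hasDerivAt_pow 2 t).div_const 2).exp).deriv]
    ring
  rw [integral_pow_gaussianReal_eq_iteratedDeriv, integral_pow_gaussianReal_eq_iteratedDeriv,
    iteratedDeriv_succ', hderiv, iteratedDeriv_fun_mul (by fun_prop) (hg.contDiffAt.of_le le_top),
    sum_eq_single 1]
  · simp [g, iteratedDeriv_fun_id_zero]
  · intro i _ hi
    simp [iteratedDeriv_fun_id_zero, hi]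
  · simp

theorem integral_pow_gaussianReal : ∀ n : ℕ, ∫ t, t ^ n ∂gaussianReal 0 1 = pairingCount n
  | 0 => by simp [pairingCount]
  | 1 => by simp [pairingCount, integral_id_gaussianReal]
  | n + 2 => by
    rw [integral_pow_add_two_gaussianReal, integral_pow_gaussianReal n, pairingCount]
    push_cast
    ring

lemma Equiv.ofFiberEquiv_apply_of_eq {α β γ : Type*} {f : α → γ} {g : β → γ}
    (e : ∀ c, {a // f a = c} ≃ {b // g b = c}) {a : α} {c : γ} (h : f a = c) :
    ofFiberEquiv e a = e c ⟨a, h⟩ := by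
  subst h
  rfl

abbrev PerfectMatching (ι : Type*) := {σ : Perm ι // (∀ i, σ (σ i) = i) ∧ ∀ i, σ i ≠ i}

namespace PerfectMatching

section Pair

variable {ι : Type*} {a b : ι}

lemma apply_ne_and_apply_ne_iff {σ : Perm ι} (hσ : ∀ i, σ (σ i) = i) (hab : σ a = b) (c : ι) :
    σ c ≠ a ∧ σ c ≠ b ↔ c ≠ a ∧ c ≠ b := by
  have h : σ c = a ↔ c = b := ⟨fun h => by rw [← hσ c, h, hab], fun h => by rw [h, ← hab, hσ]⟩
  rw [ne_eq, ne_eq, h, ← hab, σ.injective.eq_iff, and_comm]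

variable [DecidableEq ι]

def extendPair (a b : ι) (τ : Perm {c // c ≠ a ∧ c ≠ b}) : Perm ι := swap a b * Perm.ofSubtype τ

@[simp] lemma extendPair_apply_left (τ : Perm {c // c ≠ a ∧ c ≠ b}) : extendPair a b τ a = b := by
  simp [extendPair, Perm.ofSubtype_apply_of_not_mem]

@[simp] lemma extendPair_apply_right (τ : Perm {c // c ≠ a ∧ c ≠ b}) : extendPair a b τ b = a := by
  simp [extendPair, Perm.ofSubtype_apply_of_not_mem]

lemma extendPair_apply_of_ne (τ : Perm {c // c ≠ a ∧ c ≠ b}) {i : ι} (hi : i ≠ a ∧ i ≠ b) :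
    extendPair a b τ i = τ ⟨i, hi⟩ := by
  rw [extendPair, Perm.mul_apply, Perm.ofSubtype_apply_of_mem τ hi,
    swap_apply_of_ne_of_ne (τ _).2.1 (τ _).2.2]

def equivOfPair (hab : a ≠ b) :
    {σ : PerfectMatching ι // σ.1 a = b} ≃ PerfectMatching {c // c ≠ a ∧ c ≠ b} where
  toFun σ :=
    ⟨σ.1.1.subtypePerm (apply_ne_and_apply_ne_iff σ.1.2.1 σ.2), fun c => Subtype.ext (σ.1.2.1 c),
      fun c h => σ.1.2.2 c (congrArg Subtype.val h)⟩
  invFun τ :=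
    have hcases (i : ι) : i = a ∨ i = b ∨ (i ≠ a ∧ i ≠ b) := by tauto
    ⟨⟨extendPair a b τ.1,
      fun i => by
        obtain rfl | rfl | hi := hcases i
        · simp
        · simp
        · rw [extendPair_apply_of_ne _ hi, extendPair_apply_of_ne _ (τ.1 _).2, τ.2.1],
      fun i => by
        obtain rfl | rfl | hi := hcases i
        · simpa using hab.symm
        · simpa using hab
        · rw [extendPair_apply_of_ne _ hi]
          exact fun h => τ.2.2 _ (Subtype.ext h)⟩,
     extendPair_apply_left _⟩
  left_inv := by
    rintro ⟨⟨σ, hσ, -⟩, hab'⟩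
    ext i
    obtain rfl | rfl | hi : i = a ∨ i = b ∨ (i ≠ a ∧ i ≠ b) := by tauto
    · simp [hab']
    · rw [extendPair_apply_right]
      exact (hab' ▸ hσ a).symm
    · simp [extendPair_apply_of_ne _ hi]
  right_inv τ := by
    ext c
    simp [extendPair_apply_of_ne _ c.2]

variable [Fintype ι]

lemma card_eq_sum_card_compl_pair (a : ι) :
    Fintype.card (PerfectMatching ι) =
      ∑ b ∈ univ.erase a, Fintype.card (PerfectMatching {c // c ≠ a ∧ c ≠ b}) := by
  have hfiber : Fintype.card (PerfectMatching ι) =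
      ∑ b, Fintype.card {σ : PerfectMatching ι // σ.1 a = b} := by
    rw [← Fintype.card_sigma]
    exact Fintype.card_congr (sigmaFiberEquiv _).symm
  have hfixed : Fintype.card {σ : PerfectMatching ι // σ.1 a = a} = 0 :=
    Fintype.card_eq_zero_iff.mpr ⟨fun σ => σ.1.2.2 a σ.2⟩
  rw [hfiber,
    ← sum_erase (f := fun b => Fintype.card {σ : PerfectMatching ι // σ.1 a = b}) _ hfixed]
  exact sum_congr rfl fun b hb => Fintype.card_congr (equivOfPair (ne_of_mem_erase hb).symm)

theorem card_eq_pairingCount :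
    Fintype.card (PerfectMatching ι) = pairingCount (Fintype.card ι) := by
  induction h : Fintype.card ι using Nat.strong_induction_on generalizing ι with
  | _ N ih =>
  rcases N with _ | M
  · have : IsEmpty ι := Fintype.card_eq_zero_iff.mp h
    exact Fintype.card_eq_one_iff.mpr ⟨⟨1, isEmptyElim, isEmptyElim⟩,
      fun σ => Subtype.ext (Equiv.ext isEmptyElim)⟩
  obtain ⟨a⟩ : Nonempty ι := Fintype.card_pos_iff.mp (by omega)
  have hcompl (b : ι) (hb : b ∈ univ.erase a) :
      Fintype.card (PerfectMatching {c // c ≠ a ∧ c ≠ b}) = pairingCount (M - 1) := by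
    refine ih (M - 1) (by omega) ?_
    simp [Fintype.card_subtype, filter_and, filter_ne', (ne_of_mem_erase hb).symm, h]
  rw [card_eq_sum_card_compl_pair a, sum_congr rfl hcompl, sum_const,
    card_erase_of_mem (mem_univ a), card_univ, h, smul_eq_mul]
  rcases M with _ | k <;> rfl

end Pair

section Fiber

variable {ι κ : Type*}

def equivPiFiber (f : ι → κ) :
    {σ : PerfectMatching ι // ∀ i, f (σ.1 i) = f i} ≃ ∀ k, PerfectMatching {i // f i = k} where
  toFun σ k :=
    ⟨σ.1.1.subtypePerm (fun i => by rw [σ.2]), fun i => Subtype.ext (σ.1.2.1 i),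
      fun i h => σ.1.2.2 i (congrArg Subtype.val h)⟩
  invFun τ :=
    ⟨⟨ofFiberEquiv fun k => (τ k).1,
      fun i => by
        rw [ofFiberEquiv_apply_of_eq _ (rfl : f i = f i), ofFiberEquiv_apply_of_eq _ ((τ _).1 _).2,
          (τ _).2.1],
      fun i => by
        rw [ofFiberEquiv_apply_of_eq _ (rfl : f i = f i)]
        exact fun h => (τ _).2.2 _ (Subtype.ext h)⟩,
     ofFiberEquiv_map _⟩
  left_inv σ := rfl
  right_inv τ := by
    ext k i
    simp [ofFiberEquiv_apply_of_eq _ i.2]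

theorem card_fiberwise [Fintype ι] [DecidableEq ι] [DecidableEq κ] (f : ι → κ) :
    Fintype.card {σ : PerfectMatching ι // ∀ i, f (σ.1 i) = f i} =
      ∏ k ∈ univ.image f, pairingCount #{i | f i = k} := by
  let f' : ι → univ.image f := fun i => ⟨f i, mem_image_of_mem f (mem_univ i)⟩
  have hf' (i j : ι) : f' i = f' j ↔ f i = f j := Subtype.ext_iff
  rw [Fintype.card_congr (subtypeEquivRight fun σ => forall_congr' fun i => (hf' _ _).symm),
    Fintype.card_congr (equivPiFiber f'), Fintype.card_pi,
    ← prod_coe_sort (univ.image f) fun k => pairingCount #{i | f i = k}]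
  refine prod_congr rfl fun k _ => ?_
  rw [card_eq_pairingCount, Fintype.card_subtype]
  simp [f', Subtype.ext_iff]

lemma forall_lt_imp_iff [LinearOrder ι] {σ : PerfectMatching ι} {g : ι → κ} :
    (∀ i, i < σ.1 i → g i = g (σ.1 i)) ↔ ∀ i, g (σ.1 i) = g i := by
  refine ⟨fun h i => ?_, fun h i _ => (h i).symm⟩
  rcases lt_or_gt_of_ne (σ.2.2 i) with hi | hi
  · simpa [σ.2.1] using h (σ.1 i) (by rwa [σ.2.1])
  · exact (h i hi).symm

end Fiber

end PerfectMatching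

section Independent

variable {Ω Λ : Type*} [MeasurableSpace Ω] {P : Measure Ω} {ω : Λ → Ω → ℝ}

lemma integral_pow_of_map_eq_gaussianReal {X : Ω → ℝ} (hX : AEMeasurable X P)
    (hlaw : P.map X = gaussianReal 0 1) (n : ℕ) : ∫ a, X a ^ n ∂P = pairingCount n := by
  rw [← integral_pow_gaussianReal, ← hlaw, integral_map hX (by fun_prop)]

lemma integral_prod_pow_of_iIndepFun (hmeas : ∀ y, Measurable (ω y)) (hindep : iIndepFun ω P)
    (hgauss : ∀ y, P.map (ω y) = gaussianReal 0 1) (s : Finset Λ) (m : Λ → ℕ) :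
    ∫ a, ∏ y ∈ s, ω y a ^ m y ∂P = ∏ y ∈ s, (pairingCount (m y) : ℝ) := by
  have hindep_s : iIndepFun (fun y : s => ω y) P := hindep.precomp Subtype.val_injective
  simp_rw [← prod_coe_sort s]
  rw [hindep_s.integral_fun_prod_comp (f := fun (y : s) t => t ^ m y)
    (fun y => (hmeas y).aemeasurable) (fun y => by fun_prop)]
  exact prod_congr rfl fun y _ =>
    integral_pow_of_map_eq_gaussianReal (hmeas y).aemeasurable (hgauss y) _

lemma integral_mul_of_iIndepFun [DecidableEq Λ] (hmeas : ∀ y, Measurable (ω y))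
    (hindep : iIndepFun ω P) (hgauss : ∀ y, P.map (ω y) = gaussianReal 0 1) (y z : Λ) :
    ∫ a, ω y a * ω z a ∂P = if y = z then 1 else 0 := by
  split_ifs with h
  · subst h
    simpa [← sq, pairingCount] using
      integral_prod_pow_of_iIndepFun hmeas hindep hgauss {y} fun _ => 2
  · simpa [prod_pair h, pairingCount] using
      integral_prod_pow_of_iIndepFun hmeas hindep hgauss {y, z} fun _ => 1

end Independent

theorem wick_theorem_gaussian_general
    {Ω : Type*} [MeasurableSpace Ω] (P : Measure Ω)
    {Λ : Type*} (ω : Λ → Ω → ℝ)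
    (hmeas : ∀ x, Measurable (ω x))
    (hindep : iIndepFun ω P)
    (hgauss : ∀ x, Measure.map (ω x) P = gaussianReal 0 1)
    (n : ℕ) (x : Fin (2 * n) → Λ) :
    ∫ a, ∏ i, ω (x i) a ∂P =
      ∑ σ : {σ : Equiv.Perm (Fin (2 * n)) // (∀ i, σ (σ i) = i) ∧ ∀ i, σ i ≠ i},
        ∏ i ∈ Finset.univ.filter (fun i : Fin (2 * n) => i < σ.1 i),
          ∫ a, ω (x i) a * ω (x (σ.1 i)) a ∂P := by
  classical
  have hLHS : ∫ a, ∏ i, ω (x i) a ∂P = ∏ y ∈ univ.image x, (pairingCount #{i | x i = y} : ℝ) := by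
    rw [← integral_prod_pow_of_iIndepFun hmeas hindep hgauss]
    exact integral_congr_ae (ae_of_all _ fun a => Finset.prod_comp (fun y => ω y a) x)
  rw [hLHS]
  simp_rw [integral_mul_of_iIndepFun hmeas hindep hgauss, prod_boole]
  simp only [mem_filter, mem_univ, true_and, PerfectMatching.forall_lt_imp_iff, sum_boole]
  rw [← Nat.cast_prod, ← PerfectMatching.card_fiberwise, Fintype.card_subtype]

/-- Wick's theorem for i.i.d. standard Gaussians: for i.i.d. centered real Gaussian
random variables `ω x` with unit variance and any indices `x₁, …, x_{2n}`
(repetitions allowed),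
`E[ω_{x₁}⋯ω_{x_{2n}}] = Σ_π Π_{{i,j} ∈ π} E[ω_{x_i} ω_{x_j}]`,
where the sum ranges over all perfect matchings `π` of `{1, …, 2n}`, encoded as
fixed-point-free involutions of `Fin (2n)` with each pair counted once. -/
theorem wick_theorem_gaussian
    {Ω : Type*} [MeasurableSpace Ω] (P : Measure Ω) [IsProbabilityMeasure P]
    {Λ : Type*} (ω : Λ → Ω → ℝ)
    (hmeas : ∀ x, Measurable (ω x))
    (hindep : iIndepFun ω P)
    (hgauss : ∀ x, Measure.map (ω x) P = gaussianReal 0 1)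
    (n : ℕ) (x : Fin (2 * n) → Λ) :
    ∫ a, ∏ i, ω (x i) a ∂P =
      ∑ σ : {σ : Equiv.Perm (Fin (2 * n)) // (∀ i, σ (σ i) = i) ∧ ∀ i, σ i ≠ i},
        ∏ i ∈ Finset.univ.filter (fun i : Fin (2 * n) => i < σ.1 i),
          ∫ a, ω (x i) a * ω (x (σ.1 i)) a ∂P :=
  wick_theorem_gaussian_general P ω hmeas hindep hgauss n x
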